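/- With the notation of the model, for all η ∈ V and n ∈ ℕ one has [F, b∘c] η_n = −λ q^{2n} λ_n (Tη)_{n−1} + λ q^{2n+2} λ_{n+1} (Sη)_{n+1}, where [F, X] := F∘X − X∘F. -/

import Mathlib

/-! Since `b ∘ c` acts diagonally, by `-q^(2n+1)` on the `n`-th summand, its commutator with the
tridiagonal operator `F` kills the diagonal part of `F` and multiplies the off-diagonal parts by
differences of neighbouring eigenvalues, `q^(2n-1) - q^(2n+1) = -(q - q⁻¹) q^(2n)` and
`q^(2n+3) - q^(2n+1) = (q - q⁻¹) q^(2n+2)`; for `n = 0` the lower term vanishes as `λ₀ = 0`. -/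

/-- `lam q n = λ_n = (1 - q^(2n))^(1/2)`, so `lam q 0 = 0`. -/
noncomputable def lam (q : ℝ) (n : ℕ) : ℝ := Real.sqrt (1 - q ^ (2 * n))

@[simp]
theorem lam_zero (q : ℝ) : lam q 0 = 0 := by
  simp [lam]

theorem inv_mul_pow_add_two {G₀ : Type*} [GroupWithZero G₀] (a : G₀) (k : ℕ) :
    a⁻¹ * a ^ (k + 2) = a ^ (k + 1) := by
  rw [pow_succ', pow_succ', ← mul_assoc, ← mul_assoc, inv_mul_mul_self]

section Tridiagonal

variable {R V : Type*} [CommRing R] [AddCommGroup V] [Module R V]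

theorem commutator_apply_single_of_diagonal_of_tridiagonal
    (D F : (ℕ →₀ V) →ₗ[R] (ℕ →₀ V)) (μ α β : ℕ → R) (T S : V → V) (M : ℕ → V → V)
    (hD : ∀ (η : V) (n : ℕ), D (Finsupp.single n η) = μ n • Finsupp.single n η)
    (hF : ∀ (η : V) (n : ℕ),
      F (Finsupp.single n η) = α n • Finsupp.single (n - 1) (T η)
        + Finsupp.single n (M n η) + β n • Finsupp.single (n + 1) (S η))
    (η : V) (n : ℕ) :
    (F ∘ₗ D - D ∘ₗ F) (Finsupp.single n η)
      = ((μ n - μ (n - 1)) * α n) • Finsupp.single (n - 1) (T η)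
        + ((μ n - μ (n + 1)) * β n) • Finsupp.single (n + 1) (S η) := by
  simp only [LinearMap.sub_apply, LinearMap.comp_apply, hD, map_add, map_smul, hF]
  module

end Tridiagonal

theorem commutator_F_bc_general
    (q : ℝ)
    (V : Type*) [AddCommGroup V] [Module ℂ V]
    (w : V ≃ₗ[ℂ] V) (T S R : V →ₗ[ℂ] V)
    (b c F : (ℕ →₀ V) →ₗ[ℂ] (ℕ →₀ V))
    (hb : ∀ (η : V) (n : ℕ),
      b (Finsupp.single n η) = -(((q ^ (n + 1) : ℝ)) : ℂ) • Finsupp.single n (w.symm η))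
    (hc : ∀ (η : V) (n : ℕ),
      c (Finsupp.single n η) = ((q ^ n : ℝ) : ℂ) • Finsupp.single n (w η))
    (hF : ∀ (η : V) (n : ℕ),
      F (Finsupp.single n η) = (lam q n : ℂ) • Finsupp.single (n - 1) (T η)
        + Finsupp.single n ((w ^ n) (R ((w.symm ^ n) η)))
        + (lam q (n + 1) : ℂ) • Finsupp.single (n + 1) (S η))
    :
    ∀ (η : V) (n : ℕ),
      (F ∘ₗ (b ∘ₗ c) - (b ∘ₗ c) ∘ₗ F) (Finsupp.single n η)
        = -(((q - q⁻¹) * q ^ (2 * n) * lam q n : ℝ) : ℂ) • Finsupp.single (n - 1) (T η)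
          + (((q - q⁻¹) * q ^ (2 * n + 2) * lam q (n + 1) : ℝ) : ℂ) •
              Finsupp.single (n + 1) (S η) := by
  have hbc : ∀ (η : V) (n : ℕ), (b ∘ₗ c) (Finsupp.single n η)
      = -((q ^ (2 * n + 1) : ℝ) : ℂ) • Finsupp.single n η := by
    intro η n
    rw [LinearMap.comp_apply, hc, map_smul, hb, LinearEquiv.symm_apply_apply, smul_smul]
    push_cast
    ring_nf
  intro η n
  rw [commutator_apply_single_of_diagonal_of_tridiagonal _ F _ _ _ T S _ hbc hF]
  congr 2
  · rcases n with _ | n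
    · simp
    · push_cast
      linear_combination -(lam q (n + 1) : ℂ) * inv_mul_pow_add_two (q : ℂ) (2 * n)
  · push_cast
    linear_combination (lam q (n + 1) : ℂ) * inv_mul_pow_add_two (q : ℂ) (2 * n)

/-- Section 6 of the paper: the commutator `[F, π(y₀)]` for `y₀ = bc`, a generator of the Podles sphere algebra `𝒪(S²_q)`. -/
theorem commutator_F_bc
    (q : ℝ) (hq0 : 0 < q) (hq1 : q < 1)
    (V : Type*) [AddCommGroup V] [Module ℂ V]
    (w : V ≃ₗ[ℂ] V) (T S R : V →ₗ[ℂ] V)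
    (hT : ∀ η : V, w (T (w.symm η)) = (q : ℂ) • T η)
    (hS : ∀ η : V, w (S (w.symm η)) = (q : ℂ) • S η)
    (hR : ∀ η : V, w (w (R (w.symm (w.symm η)))) + ((q ^ 2 : ℝ) : ℂ) • R η
            = ((1 + q ^ 2 : ℝ) : ℂ) • w (R (w.symm η)))
    (a b c d F : (ℕ →₀ V) →ₗ[ℂ] (ℕ →₀ V))
    (ha : ∀ (η : V) (n : ℕ),
      a (Finsupp.single n η) = (lam q n : ℂ) • Finsupp.single (n - 1) η)
    (hb : ∀ (η : V) (n : ℕ),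
      b (Finsupp.single n η) = -(((q ^ (n + 1) : ℝ)) : ℂ) • Finsupp.single n (w.symm η))
    (hc : ∀ (η : V) (n : ℕ),
      c (Finsupp.single n η) = ((q ^ n : ℝ) : ℂ) • Finsupp.single n (w η))
    (hd : ∀ (η : V) (n : ℕ),
      d (Finsupp.single n η) = (lam q (n + 1) : ℂ) • Finsupp.single (n + 1) η)
    (hF : ∀ (η : V) (n : ℕ),
      F (Finsupp.single n η) = (lam q n : ℂ) • Finsupp.single (n - 1) (T η)
        + Finsupp.single n ((w ^ n) (R ((w.symm ^ n) η)))
        + (lam q (n + 1) : ℂ) • Finsupp.single (n + 1) (S η))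
    :
    ∀ (η : V) (n : ℕ),
      (F ∘ₗ (b ∘ₗ c) - (b ∘ₗ c) ∘ₗ F) (Finsupp.single n η)
        = -(((q - q⁻¹) * q ^ (2 * n) * lam q n : ℝ) : ℂ) • Finsupp.single (n - 1) (T η)
          + (((q - q⁻¹) * q ^ (2 * n + 2) * lam q (n + 1) : ℝ) : ℂ) •
              Finsupp.single (n + 1) (S η) :=
  commutator_F_bc_general q V w T S R b c F hb hc hF
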